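/- arXiv:1412.4058 — 2 statements merged into one kernel-verified Lean document; each statement's English description precedes it below -/
import Mathlib

section
/- For n ≥ 3, the restricted 2-critical number of Z_n equals ⌊n/2⌋ + 2; that is, every subset A of Z_n with |A| ≥ ⌊n/2⌋ + 2 satisfies {a + b : a, b ∈ A, a ≠ b} = Z_n, and there is a subset of size ⌊n/2⌋ + 1 whose restricted 2-fold sumset is not all of Z_n. -/
/-!
For `x` in a finite cyclic group `G` and `|A| ≥ (|G| + 3) / 2`, the sets `A` and `x - A` meet in
at least three points, while at most two elements `a` satisfy `a + a = x` (a cyclic group has at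
most two solutions of `2 • y = 0`). So some `a ∈ A ∩ (x - A)` has `b := x - a ≠ a`, and
`x = a + b`. The bound is sharp: no two distinct elements of `{0, 1, …, ⌊n/2⌋}` sum to `0` in `ℤ/n`.
-/

open Finset

/-- The `h`-fold restricted sumset of a finite set `A`: all sums of `h`
pairwise distinct elements of `A`. -/
def restSumset {G : Type*} [AddCommMonoid G] [DecidableEq G] (h : ℕ) (A : Finset G) :
    Finset G :=
  (A.powersetCard h).image fun s => s.sum id

lemma mem_restSumset_two {G : Type*} [AddCommMonoid G] [DecidableEq G] {A : Finset G} {x : G} :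
    x ∈ restSumset 2 A ↔ ∃ a ∈ A, ∃ b ∈ A, a ≠ b ∧ a + b = x := by
  simp only [restSumset, mem_image, mem_powersetCard, card_eq_two]
  constructor
  · rintro ⟨_, ⟨hsA, a, b, hab, rfl⟩, rfl⟩
    exact ⟨a, hsA (by simp), b, hsA (by simp), hab, (sum_pair (f := id) hab).symm⟩
  · rintro ⟨a, ha, b, hb, hab, rfl⟩
    exact ⟨{a, b}, ⟨insert_subset ha (singleton_subset_iff.2 hb), a, b, hab, rfl⟩, sum_pair hab⟩

section Cyclic

variable {G : Type*} [AddCommGroup G] [Fintype G] [DecidableEq G] [IsAddCyclic G]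

lemma IsAddCyclic.card_add_self_eq_le (x : G) : #{a : G | a + a = x} ≤ 2 := by
  rcases (filter (fun a : G => a + a = x) univ).eq_empty_or_nonempty with h | ⟨a₀, ha₀⟩
  · simp [h]
  refine le_trans ?_ (IsAddCyclic.card_nsmul_eq_zero_le (α := G) two_pos)
  refine card_le_card_of_injOn (· - a₀) (fun a ha => ?_) sub_left_injective.injOn
  simp only [coe_filter, mem_filter, mem_univ, true_and, Set.mem_ofPred_eq] at ha ha₀ ⊢
  rw [two_nsmul, sub_add_sub_comm, ha, ha₀, sub_self]

theorem restSumset_two_eq_univ_of_card {A : Finset G} (hA : Fintype.card G + 3 ≤ 2 * #A) :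
    restSumset 2 A = univ := by
  refine eq_univ_of_forall fun x => mem_restSumset_two.2 ?_
  set B := A.image (x - ·)
  have hB : #B = #A := card_image_of_injective A sub_right_injective
  have hinter : 2 < #(A ∩ B) := by
    have := card_union_add_card_inter A B
    have := card_le_univ (A ∪ B)
    omega
  obtain ⟨a, haAB, hax⟩ := exists_mem_notMem_of_card_lt_card
    ((IsAddCyclic.card_add_self_eq_le x).trans_lt hinter)
  obtain ⟨haA, haB⟩ := mem_inter.1 haAB
  obtain ⟨b, hbA, rfl⟩ := mem_image.1 haB
  refine ⟨x - b, haA, b, hbA, fun h => hax ?_, sub_add_cancel x b⟩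
  simp only [mem_filter, mem_univ, true_and]
  nth_rw 2 [h]
  exact sub_add_cancel x b

end Cyclic

lemma card_image_natCast_range {n m : ℕ} (hm : m ≤ n) :
    #((range m).image (Nat.cast : ℕ → ZMod n)) = m := by
  rw [card_image_of_injOn, card_range]
  exact (CharP.natCast_injOn_Iio (ZMod n) n).mono fun i hi => by
    simp only [coe_range, Set.mem_Iio] at hi ⊢
    omega

lemma zero_notMem_restSumset_two_image_natCast_range {n m : ℕ} (hm : 2 * m ≤ n) :
    (0 : ZMod n) ∉ restSumset 2 ((range (m + 1)).image (Nat.cast : ℕ → ZMod n)) := by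
  simp only [mem_restSumset_two, mem_image, mem_range]
  rintro ⟨_, ⟨i, hi, rfl⟩, _, ⟨j, hj, rfl⟩, hij, hsum⟩
  have hdvd : n ∣ i + j := (ZMod.natCast_eq_zero_iff _ n).1 (by push_cast; exact hsum)
  have hne : i ≠ j := fun h => hij (congrArg _ h)
  have := Nat.le_of_dvd (by omega) hdvd
  omega

theorem stmt6_general (n : ℕ) [NeZero n] :
    (∀ A : Finset (ZMod n), n / 2 + 2 ≤ A.card → restSumset 2 A = Finset.univ) ∧
    (∃ A : Finset (ZMod n), A.card = n / 2 + 1 ∧ restSumset 2 A ≠ Finset.univ) := by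
  have hn : 0 < n := Nat.pos_of_neZero n
  refine ⟨fun A hA => restSumset_two_eq_univ_of_card ?_, ?_⟩
  · rw [ZMod.card]
    omega
  · refine ⟨(range (n / 2 + 1)).image Nat.cast, card_image_natCast_range (by omega), fun h => ?_⟩
    exact zero_notMem_restSumset_two_image_natCast_range (Nat.mul_div_le n 2) (h ▸ mem_univ 0)

theorem stmt6 (n : ℕ) [NeZero n] (hn : 3 ≤ n) :
    (∀ A : Finset (ZMod n), n / 2 + 2 ≤ A.card → restSumset 2 A = Finset.univ) ∧
    (∃ A : Finset (ZMod n), A.card = n / 2 + 1 ∧ restSumset 2 A ≠ Finset.univ) :=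
  stmt6_general n
end

section
/- Let G be a finite abelian group of order n, not an elementary abelian 2-group, L = {x : 2x = 0}, and let h be an integer with (n + |L|)/2 − 1 ≤ h ≤ n − 2. Then every subset A of G with |A| = h + 2 satisfies h∧A = G, while no subset of size h + 1 does; i.e., the restricted h-critical number of G equals h + 2. -/
open Finset

section RestrictedSumset

variable {G : Type*} [AddCommGroup G] [DecidableEq G]

theorem mem_restSumset {h : ℕ} {A : Finset G} {x : G} :
    x ∈ restSumset h A ↔ ∃ s ⊆ A, #s = h ∧ ∑ a ∈ s, a = x := by
  simp [restSumset, mem_powersetCard, and_assoc]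

theorem card_restSumset_le (h : ℕ) (A : Finset G) : #(restSumset h A) ≤ (#A).choose h :=
  (card_image_le).trans (card_powersetCard h A).le

theorem sub_mem_restSumset_card_sub {k : ℕ} {A : Finset G} {x : G} (hx : x ∈ restSumset k A) :
    ∑ a ∈ A, a - x ∈ restSumset (#A - k) A := by
  obtain ⟨s, hsA, hs, rfl⟩ := mem_restSumset.mp hx
  exact mem_restSumset.mpr
    ⟨A \ s, sdiff_subset, by rw [card_sdiff_of_subset hsA, hs], sum_sdiff_eq_sub hsA⟩

theorem restSumset_card_sub_eq_univ [Fintype G] {k : ℕ} {A : Finset G}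
    (hk : restSumset k A = univ) : restSumset (#A - k) A = univ :=
  eq_univ_of_forall fun g => by
    have hmem : ∑ a ∈ A, a - g ∈ restSumset k A := hk ▸ mem_univ _
    simpa only [sub_sub_cancel] using sub_mem_restSumset_card_sub hmem

end RestrictedSumset

section Halving

variable {G : Type*} [AddCommGroup G] [Fintype G] [DecidableEq G]

theorem card_filter_add_self_eq_le (t : G) :
    #{a | a + a = t} ≤ #{a : G | a + a = 0} := by
  rcases eq_empty_or_nonempty ({a | a + a = t} : Finset G) with hempty | ⟨a₀, ha₀⟩
  · simp [hempty]
  · rw [mem_filter] at ha₀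
    refine card_le_card_of_injOn (· - a₀) (fun a ha => ?_) fun a _ b _ hab => sub_left_injective hab
    simp only [coe_filter, mem_univ, true_and, Set.mem_ofPred_eq] at ha ⊢
    rw [sub_add_sub_comm, ha, ha₀.2, sub_self]

theorem restSumset_two_eq_univ {A : Finset G}
    (hA : Fintype.card G + #{x : G | x + x = 0} < 2 * #A) : restSumset 2 A = univ := by
  refine eq_univ_of_forall fun t => ?_
  set B := A.image (t - ·)
  have hB : #B = #A := card_image_of_injective A sub_right_injective
  have hAB : #{a | a + a = t} < #(A ∩ B) := by
    have := card_union_add_card_inter A B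
    have := card_le_univ (A ∪ B)
    have := card_filter_add_self_eq_le t
    omega
  obtain ⟨a, haAB, hat⟩ := exists_mem_notMem_of_card_lt_card hAB
  obtain ⟨haA, haB⟩ := mem_inter.mp haAB
  obtain ⟨b, hbA, rfl⟩ := mem_image.mp haB
  have hne : t - b ≠ b := fun heq => hat <| by
    simp only [mem_filter, mem_univ, true_and]
    nth_rw 2 [heq]
    exact sub_add_cancel t b
  exact mem_restSumset.mpr
    ⟨{t - b, b}, by simp [insert_subset_iff, haA, hbA], card_pair hne, by simp [sum_pair hne]⟩

end Halving

theorem stmt7 {G : Type*} [AddCommGroup G] [Fintype G] [DecidableEq G]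
    (hG : ¬ ∀ x : G, x + x = 0) (h : ℕ)
    (h1 : (Fintype.card G + (Finset.univ.filter fun x : G => x + x = 0).card) / 2 - 1 ≤ h)
    (h2 : h ≤ Fintype.card G - 2) :
    (∀ A : Finset G, A.card = h + 2 → restSumset h A = Finset.univ) ∧
    (∀ A : Finset G, A.card = h + 1 → restSumset h A ≠ Finset.univ) := by
  refine ⟨fun A hA => ?_, fun A hA hAuniv => ?_⟩
  · have hsum := restSumset_card_sub_eq_univ (restSumset_two_eq_univ (A := A) (by omega))
    rwa [hA, Nat.add_sub_cancel] at hsum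
  · have : Nontrivial G := by
      push Not at hG
      obtain ⟨x, hx⟩ := hG
      exact nontrivial_of_ne x 0 fun h0 => hx (by simp [h0])
    have hn : 1 < Fintype.card G := Fintype.one_lt_card
    have hcard := card_restSumset_le h A
    rw [hAuniv, card_univ, hA, Nat.choose_succ_self_right] at hcard
    omega
end
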